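/- arXiv:1901.07189 — 6 statements merged into one kernel-verified Lean document; each statement's English description precedes it below -/
import Mathlib

section
/- Let d ≥ 1, k ∈ ℝ, ζ, η ∈ ℂ^d with ζ·ζ = k², η·η = 0 and ζ·η = 0, let m ∈ ℕ and c_1, …, c_m ∈ ℂ. Then the function ψ : ℝ^d → ℂ defined by ψ(x) = exp(i ∑_{j=1}^d ζ_j x_j) · ∏_{j=1}^m (η·x − c_j) (where η·x = ∑_{i=1}^d η_i x_i) satisfies Δψ(x) + k² ψ(x) = 0 for every x ∈ ℝ^d, and ψ(x) = 0 at every point x with η·x = c_j for some j. -/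
/-- The `i`-th partial derivative of `f : ℝ^d → ℂ`. -/
noncomputable def pd {d : ℕ} (f : EuclideanSpace ℝ (Fin d) → ℂ) (i : Fin d)
    (x : EuclideanSpace ℝ (Fin d)) : ℂ :=
  fderiv ℝ f x (EuclideanSpace.single i 1)

/-- The Laplacian `Δf = ∑ i, ∂_i² f` of `f : ℝ^d → ℂ`. -/
noncomputable def lap {d : ℕ} (f : EuclideanSpace ℝ (Fin d) → ℂ)
    (x : EuclideanSpace ℝ (Fin d)) : ℂ :=
  ∑ i, pd (fun y => pd f i y) i x

/-- The bilinear (non-conjugating) dot product on ℂ^d. -/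
noncomputable def cdot {d : ℕ} (a b : EuclideanSpace ℂ (Fin d)) : ℂ := ∑ i, a i * b i

noncomputable def lmap {d : ℕ} (a : Fin d → ℂ) : EuclideanSpace ℝ (Fin d) →L[ℝ] ℂ :=
  ∑ j, a j • (Complex.ofRealCLM.comp (EuclideanSpace.proj j))

lemma lmap_apply {d : ℕ} (a : Fin d → ℂ) (y : EuclideanSpace ℝ (Fin d)) :
    lmap a y = ∑ j, a j * (y j : ℂ) := by
  simp [lmap, ContinuousLinearMap.sum_apply, mul_comm]

lemma lmap_single {d : ℕ} (a : Fin d → ℂ) (i : Fin d) :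
    lmap a (EuclideanSpace.single i 1) = a i := by
  simp [lmap_apply, EuclideanSpace.single_apply, apply_ite Complex.ofReal]

lemma hasFDerivAt_lmap {d : ℕ} (a : Fin d → ℂ) (x : EuclideanSpace ℝ (Fin d)) :
    HasFDerivAt (fun y : EuclideanSpace ℝ (Fin d) => ∑ j, a j * (y j : ℂ)) (lmap a) x := by
  have h := (lmap a).hasFDerivAt (x := x)
  exact h.congr_fderiv rfl |>.congr_of_eventuallyEq (Filter.Eventually.of_forall fun y => (lmap_apply a y).symm) |>.congr_fderiv rfl

lemma hasFDerivAt_prod {d : ℕ} (a b : Fin d → ℂ) (f g f' g' : ℂ → ℂ)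
    (hf : ∀ z, HasDerivAt f (f' z) z) (hg : ∀ z, HasDerivAt g (g' z) z)
    (x : EuclideanSpace ℝ (Fin d)) :
    HasFDerivAt (fun y : EuclideanSpace ℝ (Fin d) =>
        f (∑ j, a j * (y j : ℂ)) * g (∑ j, b j * (y j : ℂ)))
      ((f (∑ j, a j * (x j : ℂ)) • (g' (∑ j, b j * (x j : ℂ)) • lmap b)) +
        (g (∑ j, b j * (x j : ℂ)) • (f' (∑ j, a j * (x j : ℂ)) • lmap a))) x := by
  have h1 : HasFDerivAt (fun y : EuclideanSpace ℝ (Fin d) => f (∑ j, a j * (y j : ℂ)))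
      (f' (∑ j, a j * (x j : ℂ)) • lmap a) x :=
    (hf _).comp_hasFDerivAt x (hasFDerivAt_lmap a x)
  have h2 : HasFDerivAt (fun y : EuclideanSpace ℝ (Fin d) => g (∑ j, b j * (y j : ℂ)))
      (g' (∑ j, b j * (x j : ℂ)) • lmap b) x :=
    (hg _).comp_hasFDerivAt x (hasFDerivAt_lmap b x)
  exact h1.mul h2

lemma pd_prod {d : ℕ} (a b : Fin d → ℂ) (f g f' g' : ℂ → ℂ)
    (hf : ∀ z, HasDerivAt f (f' z) z) (hg : ∀ z, HasDerivAt g (g' z) z)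
    (i : Fin d) (x : EuclideanSpace ℝ (Fin d)) :
    pd (fun y => f (∑ j, a j * (y j : ℂ)) * g (∑ j, b j * (y j : ℂ))) i x
      = a i * f' (∑ j, a j * (x j : ℂ)) * g (∑ j, b j * (x j : ℂ))
        + b i * f (∑ j, a j * (x j : ℂ)) * g' (∑ j, b j * (x j : ℂ)) := by
  rw [pd, (hasFDerivAt_prod a b f g f' g' hf hg x).fderiv]
  simp [lmap_single]
  ring

lemma pd_add {d : ℕ} (u v : EuclideanSpace ℝ (Fin d) → ℂ)
    {U V : EuclideanSpace ℝ (Fin d) →L[ℝ] ℂ} {x : EuclideanSpace ℝ (Fin d)}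
    (hu : HasFDerivAt u U x) (hv : HasFDerivAt v V x) (i : Fin d) :
    pd (fun y => u y + v y) i x = pd u i x + pd v i x := by
  have h : HasFDerivAt (fun y => u y + v y) (U + V) x := hu.add hv
  rw [pd, pd, pd, h.fderiv, hu.fderiv, hv.fderiv]
  simp

lemma pd2 {d : ℕ} (a b : Fin d → ℂ) (f g f' g' f'' g'' : ℂ → ℂ)
    (hf : ∀ z, HasDerivAt f (f' z) z) (hg : ∀ z, HasDerivAt g (g' z) z)
    (hf' : ∀ z, HasDerivAt f' (f'' z) z) (hg' : ∀ z, HasDerivAt g' (g'' z) z)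
    (i : Fin d) (x : EuclideanSpace ℝ (Fin d)) :
    pd (fun y => pd (fun y' => f (∑ j, a j * (y' j : ℂ)) * g (∑ j, b j * (y' j : ℂ))) i y) i x
      = a i * a i * f'' (∑ j, a j * (x j : ℂ)) * g (∑ j, b j * (x j : ℂ))
        + 2 * (a i * b i) * f' (∑ j, a j * (x j : ℂ)) * g' (∑ j, b j * (x j : ℂ))
        + b i * b i * f (∑ j, a j * (x j : ℂ)) * g'' (∑ j, b j * (x j : ℂ)) := by
  have h1 : (fun y => pd (fun y' => f (∑ j, a j * (y' j : ℂ)) * g (∑ j, b j * (y' j : ℂ))) i y)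
      = fun y => (a i * f' (∑ j, a j * (y j : ℂ))) * g (∑ j, b j * (y j : ℂ))
          + (b i * f (∑ j, a j * (y j : ℂ))) * g' (∑ j, b j * (y j : ℂ)) := by
    funext y
    rw [pd_prod a b f g f' g' hf hg i y]
  rw [h1]
  have hu := hasFDerivAt_prod a b (fun z => a i * f' z) g (fun z => a i * f'' z) g'
    (fun z => (hf' z).const_mul _) hg x
  have hv := hasFDerivAt_prod a b (fun z => b i * f z) g' (fun z => b i * f' z) g''
    (fun z => (hf z).const_mul _) hg' x
  rw [pd_add _ _ hu hv i]
  have h2 : pd (fun y => a i * f' (∑ j, a j * (y j : ℂ)) * g (∑ j, b j * (y j : ℂ))) i x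
      = a i * (a i * f'' (∑ j, a j * (x j : ℂ))) * g (∑ j, b j * (x j : ℂ))
        + b i * (a i * f' (∑ j, a j * (x j : ℂ))) * g' (∑ j, b j * (x j : ℂ)) :=
    pd_prod a b (fun z => a i * f' z) g (fun z => a i * f'' z) g'
      (fun z => (hf' z).const_mul _) hg i x
  have h3 : pd (fun y => b i * f (∑ j, a j * (y j : ℂ)) * g' (∑ j, b j * (y j : ℂ))) i x
      = a i * (b i * f' (∑ j, a j * (x j : ℂ))) * g' (∑ j, b j * (x j : ℂ))
        + b i * (b i * f (∑ j, a j * (x j : ℂ))) * g'' (∑ j, b j * (x j : ℂ)) :=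
    pd_prod a b (fun z => b i * f z) g' (fun z => b i * f' z) g''
      (fun z => (hf z).const_mul _) hg' i x
  rw [h2, h3]
  ring


/-- if `ζ·ζ = k²`, `η·η = 0`, `ζ·η = 0`, then
`ψ(x) = exp(i ζ·x) ∏_{j=1}^m (η·x − c_j)` satisfies `Δψ + k²ψ = 0` on ℝ^d and vanishes
on each hyperplane `η·x = c_j`. -/
theorem stmt_1 (d : ℕ) (hd : 1 ≤ d) (k : ℝ) (ζ η : EuclideanSpace ℂ (Fin d))
    (hζ : cdot ζ ζ = (k : ℂ) ^ 2) (hη : cdot η η = 0) (hζη : cdot ζ η = 0)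
    (m : ℕ) (c : Fin m → ℂ)
    (ψ : EuclideanSpace ℝ (Fin d) → ℂ)
    (hψ : ψ = fun x : EuclideanSpace ℝ (Fin d) =>
      Complex.exp (Complex.I * ∑ j, ζ j * (x j : ℂ)) *
        ∏ j : Fin m, ((∑ i, η i * (x i : ℂ)) - c j)) :
    (∀ x : EuclideanSpace ℝ (Fin d), lap ψ x + (k : ℂ) ^ 2 * ψ x = 0) ∧
    (∀ x : EuclideanSpace ℝ (Fin d), ∀ j : Fin m,
      (∑ i, η i * (x i : ℂ)) = c j → ψ x = 0) := by
  subst hψ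
  set p : Polynomial ℂ := ∏ j : Fin m, (Polynomial.X - Polynomial.C (c j)) with hp
  have hprod : ∀ z : ℂ, ∏ j : Fin m, (z - c j) = p.eval z := fun z => by
    simp [hp, Polynomial.eval_prod]
  constructor
  · intro x
    have hexp : ∀ z : ℂ, HasDerivAt (fun z => Complex.exp (Complex.I * z))
        (Complex.I * Complex.exp (Complex.I * z)) z := fun z => by
      simpa [mul_comm] using ((hasDerivAt_id z).const_mul Complex.I).cexp
    have hexp' : ∀ z : ℂ, HasDerivAt (fun z => Complex.I * Complex.exp (Complex.I * z))
        (Complex.I * (Complex.I * Complex.exp (Complex.I * z))) z :=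
      fun z => (hexp z).const_mul Complex.I
    have hg0 : ∀ z : ℂ, HasDerivAt (fun z => p.eval z) (p.derivative.eval z) z :=
      fun z => p.hasDerivAt z
    have hg1 : ∀ z : ℂ, HasDerivAt (fun z => p.derivative.eval z)
        (p.derivative.derivative.eval z) z := fun z => p.derivative.hasDerivAt z
    have hfun : (fun x : EuclideanSpace ℝ (Fin d) =>
        Complex.exp (Complex.I * ∑ j, ζ j * (x j : ℂ)) *
          ∏ j : Fin m, ((∑ i, η i * (x i : ℂ)) - c j))
        = fun y : EuclideanSpace ℝ (Fin d) =>
          (fun z => Complex.exp (Complex.I * z)) (∑ j, ζ j * (y j : ℂ)) *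
            (fun z => p.eval z) (∑ j, η j * (y j : ℂ)) := by
      funext y
      simp only [hprod]
    rw [hfun]
    have hlap : lap (fun y : EuclideanSpace ℝ (Fin d) =>
        (fun z => Complex.exp (Complex.I * z)) (∑ j, ζ j * (y j : ℂ)) *
          (fun z => p.eval z) (∑ j, η j * (y j : ℂ))) x
        = ∑ i, (ζ i * ζ i * (Complex.I * (Complex.I *
              Complex.exp (Complex.I * ∑ j, ζ j * (x j : ℂ)))) *
              p.eval (∑ j, η j * (x j : ℂ))
            + 2 * (ζ i * η i) * (Complex.I * Complex.exp (Complex.I * ∑ j, ζ j * (x j : ℂ))) *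
              p.derivative.eval (∑ j, η j * (x j : ℂ))
            + η i * η i * Complex.exp (Complex.I * ∑ j, ζ j * (x j : ℂ)) *
              p.derivative.derivative.eval (∑ j, η j * (x j : ℂ))) := by
      unfold lap
      exact Finset.sum_congr rfl fun i _ =>
        pd2 (fun j => ζ j) (fun j => η j) _ _ _ _ _ _ hexp hg0 hexp' hg1 i x
    rw [hlap]
    set E := Complex.exp (Complex.I * ∑ j, ζ j * (x j : ℂ)) with hE
    set P0 := p.eval (∑ j, η j * (x j : ℂ)) with hP0
    set P1 := p.derivative.eval (∑ j, η j * (x j : ℂ)) with hP1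
    set P2 := p.derivative.derivative.eval (∑ j, η j * (x j : ℂ)) with hP2
    have step1 : ∑ i, (ζ i * ζ i * (Complex.I * (Complex.I * E)) * P0
          + 2 * (ζ i * η i) * (Complex.I * E) * P1 + η i * η i * E * P2)
        = (∑ i, ζ i * ζ i) * (Complex.I * (Complex.I * E) * P0)
          + (∑ i, ζ i * η i) * (2 * (Complex.I * E) * P1)
          + (∑ i, η i * η i) * (E * P2) := by
      calc ∑ i, (ζ i * ζ i * (Complex.I * (Complex.I * E)) * P0
              + 2 * (ζ i * η i) * (Complex.I * E) * P1 + η i * η i * E * P2)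
          = ∑ i, (ζ i * ζ i * (Complex.I * (Complex.I * E) * P0)
              + ζ i * η i * (2 * (Complex.I * E) * P1) + η i * η i * (E * P2)) :=
            Finset.sum_congr rfl fun i _ => by ring
        _ = _ := by
            rw [Finset.sum_add_distrib, Finset.sum_add_distrib, ← Finset.sum_mul,
              ← Finset.sum_mul, ← Finset.sum_mul]
    rw [step1]
    have hζ' : ∑ i, ζ i * ζ i = (k : ℂ) ^ 2 := hζ
    have hη' : ∑ i, η i * η i = 0 := hη
    have hζη' : ∑ i, ζ i * η i = 0 := hζη
    rw [hζ', hη', hζη']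
    simp only
    linear_combination (k : ℂ) ^ 2 * E * P0 * Complex.I_mul_I
  · intro x j hj
    simp only
    rw [Finset.prod_eq_zero (Finset.mem_univ j) (by rw [hj]; ring)]
    ring
end

section
/- Let Ω ⊆ ℝ^d be an open set, k ∈ ℝ, n : Ω → ℝ, and let φ, S : Ω → ℂ be twice differentiable functions satisfying, at every point of Ω: Δφ + k²(1+n)φ = 0, ΔS = 0, (∇S)·(∇S) = 0, and (∇φ)·(∇S) = 0. Let m ∈ ℕ and x_1, …, x_m ∈ Ω, and define ψ : Ω → ℂ by ψ(x) = φ(x) · ∏_{j=1}^m (S(x) − S(x_j)). Then ψ satisfies Δψ + k²(1+n)ψ = 0 at every point of Ω, and ψ(x_j) = 0 for every j = 1, …, m. -/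
/-- The gradient `∇f = (∂_1 f, …, ∂_d f) ∈ ℂ^d` of `f : ℝ^d → ℂ`. -/
noncomputable def grad {d : ℕ} (f : EuclideanSpace ℝ (Fin d) → ℂ)
    (x : EuclideanSpace ℝ (Fin d)) : EuclideanSpace ℂ (Fin d) :=
  (WithLp.equiv 2 (Fin d → ℂ)).symm (fun i => pd f i x)

/-- `f` is twice differentiable at `x`: differentiable at `x`, and each first partial
derivative is again differentiable at `x`. -/
def TwiceDiffAt {d : ℕ} (f : EuclideanSpace ℝ (Fin d) → ℂ)
    (x : EuclideanSpace ℝ (Fin d)) : Prop :=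
  DifferentiableAt ℝ f x ∧ ∀ i, DifferentiableAt ℝ (fun y => pd f i y) x

lemma pd_mul {d : ℕ} {a b : EuclideanSpace ℝ (Fin d) → ℂ} {x}
    (ha : DifferentiableAt ℝ a x) (hb : DifferentiableAt ℝ b x) (i : Fin d) :
    pd (fun y => a y * b y) i x = pd a i x * b x + a x * pd b i x := by
  unfold pd; rw [fderiv_fun_mul ha hb]; simp; ring

lemma pd_add_s2 {d : ℕ} {a b : EuclideanSpace ℝ (Fin d) → ℂ} {x}
    (ha : DifferentiableAt ℝ a x) (hb : DifferentiableAt ℝ b x) (i : Fin d) :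
    pd (fun y => a y + b y) i x = pd a i x + pd b i x := by
  unfold pd; rw [fderiv_fun_add ha hb]; simp

open Polynomial

lemma hasFDerivAt_poly_comp {d : ℕ} (p : ℂ[X]) {S : EuclideanSpace ℝ (Fin d) → ℂ} {x}
    (hS : DifferentiableAt ℝ S x) :
    HasFDerivAt (fun y => p.eval (S y)) ((p.derivative.eval (S x)) • fderiv ℝ S x) x := by
  have h1 := ((p.hasDerivAt (S x)).hasFDerivAt.restrictScalars ℝ).comp x hS.hasFDerivAt
  refine h1.congr_fderiv ?_
  ext v
  simp [mul_comm]

lemma diff_poly_comp {d : ℕ} (p : ℂ[X]) {S : EuclideanSpace ℝ (Fin d) → ℂ} {x}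
    (hS : DifferentiableAt ℝ S x) :
    DifferentiableAt ℝ (fun y => p.eval (S y)) x :=
  (hasFDerivAt_poly_comp p hS).differentiableAt

lemma pd_poly_comp {d : ℕ} (p : ℂ[X]) {S : EuclideanSpace ℝ (Fin d) → ℂ} {x}
    (hS : DifferentiableAt ℝ S x) (i : Fin d) :
    pd (fun y => p.eval (S y)) i x = p.derivative.eval (S x) * pd S i x := by
  unfold pd
  rw [(hasFDerivAt_poly_comp p hS).fderiv]
  simp

/-- The general Laplacian formula for `φ · p(S)`. -/
lemma lap_mul_poly {d : ℕ} {Ω : Set (EuclideanSpace ℝ (Fin d))} (hΩ : IsOpen Ω)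
    {φ S : EuclideanSpace ℝ (Fin d) → ℂ}
    (hφ2 : ∀ x ∈ Ω, TwiceDiffAt φ x) (hS2 : ∀ x ∈ Ω, TwiceDiffAt S x)
    (p : ℂ[X]) {x : EuclideanSpace ℝ (Fin d)} (hx : x ∈ Ω) :
    lap (fun y => φ y * p.eval (S y)) x
      = lap φ x * p.eval (S x)
        + 2 * p.derivative.eval (S x) * cdot (grad φ x) (grad S x)
        + φ x * (p.derivative.derivative.eval (S x) * cdot (grad S x) (grad S x)
          + p.derivative.eval (S x) * lap S x) := by
  obtain ⟨hφ, hφ'⟩ := hφ2 x hx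
  obtain ⟨hS, hS'⟩ := hS2 x hx
  have key : ∀ i : Fin d,
      pd (fun y => pd (fun z => φ z * p.eval (S z)) i y) i x
        = pd (fun y => pd φ i y) i x * p.eval (S x)
          + 2 * (p.derivative.eval (S x) * (pd φ i x * pd S i x))
          + φ x * (p.derivative.derivative.eval (S x) * (pd S i x * pd S i x)
            + p.derivative.eval (S x) * pd (fun y => pd S i y) i x) := by
    intro i
    -- first-derivative formula on a neighborhood
    have hev : (fun y => pd (fun z => φ z * p.eval (S z)) i y)
        =ᶠ[nhds x] fun y => pd φ i y * p.eval (S y)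
          + φ y * (p.derivative.eval (S y) * pd S i y) := by
      filter_upwards [hΩ.mem_nhds hx] with y hy
      have hφy := (hφ2 y hy).1
      have hSy := (hS2 y hy).1
      rw [pd_mul hφy (diff_poly_comp p hSy) i, pd_poly_comp p hSy i]
    rw [show pd (fun y => pd (fun z => φ z * p.eval (S z)) i y) i x
        = pd (fun y => pd φ i y * p.eval (S y)
          + φ y * (p.derivative.eval (S y) * pd S i y)) i x from
      congrFun (congrArg _ hev.fderiv_eq) _]
    have d1 : DifferentiableAt ℝ (fun y => pd φ i y * p.eval (S y)) x :=
      (hφ' i).mul (diff_poly_comp p hS)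
    have d2i : DifferentiableAt ℝ (fun y => p.derivative.eval (S y) * pd S i y) x :=
      (diff_poly_comp _ hS).mul (hS' i)
    have d2 : DifferentiableAt ℝ (fun y => φ y * (p.derivative.eval (S y) * pd S i y)) x :=
      hφ.mul d2i
    rw [pd_add_s2 d1 d2 i, pd_mul (hφ' i) (diff_poly_comp p hS) i, pd_poly_comp p hS i,
      pd_mul hφ d2i i, pd_mul (diff_poly_comp _ hS) (hS' i) i, pd_poly_comp _ hS i]
    ring
  have hc1 : cdot (grad φ x) (grad S x) = ∑ i, pd φ i x * pd S i x := rfl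
  have hc2 : cdot (grad S x) (grad S x) = ∑ i, pd S i x * pd S i x := rfl
  unfold lap
  rw [Finset.sum_congr rfl (fun i _ => key i), hc1, hc2]
  rw [Finset.sum_add_distrib, Finset.sum_add_distrib]
  congr 1
  · congr 1
    · rw [Finset.sum_mul]
    · rw [Finset.mul_sum]
      exact Finset.sum_congr rfl fun i _ => by ring
  · rw [Finset.mul_sum, Finset.mul_sum, ← Finset.sum_add_distrib, Finset.mul_sum]

/-- if on the open set `Ω` the twice differentiable functions `φ, S` satisfy
`Δφ + k²(1+n)φ = 0`, `ΔS = 0`, `∇S·∇S = 0` and `∇φ·∇S = 0`, then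
`ψ(x) = φ(x) ∏_{j=1}^m (S(x) − S(x_j))` satisfies `Δψ + k²(1+n)ψ = 0` on `Ω`
and vanishes at each `x_j`. -/
theorem stmt_2 (d : ℕ) (Ω : Set (EuclideanSpace ℝ (Fin d))) (hΩ : IsOpen Ω)
    (k : ℝ) (n : EuclideanSpace ℝ (Fin d) → ℝ)
    (φ S : EuclideanSpace ℝ (Fin d) → ℂ)
    (hφ2 : ∀ x ∈ Ω, TwiceDiffAt φ x) (hS2 : ∀ x ∈ Ω, TwiceDiffAt S x)
    (hφeq : ∀ x ∈ Ω, lap φ x + (k : ℂ) ^ 2 * (1 + (n x : ℂ)) * φ x = 0)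
    (hSharm : ∀ x ∈ Ω, lap S x = 0)
    (hSnull : ∀ x ∈ Ω, cdot (grad S x) (grad S x) = 0)
    (hortho : ∀ x ∈ Ω, cdot (grad φ x) (grad S x) = 0)
    (m : ℕ) (xs : Fin m → EuclideanSpace ℝ (Fin d)) (hxs : ∀ j, xs j ∈ Ω)
    (ψ : EuclideanSpace ℝ (Fin d) → ℂ)
    (hψ : ψ = fun x => φ x * ∏ j : Fin m, (S x - S (xs j))) :
    (∀ x ∈ Ω, lap ψ x + (k : ℂ) ^ 2 * (1 + (n x : ℂ)) * ψ x = 0) ∧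
    (∀ j : Fin m, ψ (xs j) = 0) := by
  set p : ℂ[X] := ∏ j : Fin m, (X - C (S (xs j))) with hp
  have hψ' : ψ = fun y => φ y * p.eval (S y) := by
    rw [hψ]; funext y; simp [hp, eval_prod]
  constructor
  · intro x hx
    have hlap : lap ψ x = lap φ x * p.eval (S x) := by
      rw [hψ', lap_mul_poly hΩ hφ2 hS2 p hx, hSharm x hx, hSnull x hx, hortho x hx]
      ring
    rw [hlap, hψ']
    have := hφeq x hx
    calc lap φ x * p.eval (S x) + (k : ℂ) ^ 2 * (1 + (n x : ℂ)) * (φ x * p.eval (S x))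
        = (lap φ x + (k : ℂ) ^ 2 * (1 + (n x : ℂ)) * φ x) * p.eval (S x) := by ring
      _ = 0 := by rw [this]; ring
  · intro j
    rw [hψ]
    simp only
    rw [Finset.prod_eq_zero (Finset.mem_univ j) (by ring), mul_zero]
end

section
/- Let Ω ⊆ ℝ^d be a nonempty bounded open set, let ζ ∈ ℂ^d with ‖ζ‖ > 1 (Euclidean norm on ℂ^d), and let r : Ω → ℂ be differentiable with |r(x)| ≤ 1/2 and ‖∇r(x)‖ ≤ 1/2 for all x ∈ Ω. Define φ : Ω → ℂ by φ(x) = exp(i ∑_{j=1}^d ζ_j x_j) · (1 + r(x)). Then: (i) ∇φ(x) ≠ 0 for every x ∈ Ω; (ii) inf_{x∈Ω} |φ(x)| > 0; and (iii) there exists a constant μ > 0 such that sup_{x∈Ω} (|φ(x)| + ‖∇φ(x)‖) ≤ μ · inf_{x∈Ω} |φ(x)|. -/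
/-- The linear map `x ↦ i ∑ⱼ ζⱼ xⱼ`. -/
noncomputable def Lmap {d : ℕ} (ζ : EuclideanSpace ℂ (Fin d)) :
    EuclideanSpace ℝ (Fin d) →L[ℝ] ℂ :=
  ∑ j, (Complex.I * ζ j) • ((Complex.ofRealCLM).comp
    (EuclideanSpace.proj j : EuclideanSpace ℝ (Fin d) →L[ℝ] ℝ))

lemma Lmap_apply {d : ℕ} (ζ : EuclideanSpace ℂ (Fin d)) (x : EuclideanSpace ℝ (Fin d)) :
    Lmap ζ x = Complex.I * ∑ j, ζ j * (x j : ℂ) := by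
  simp [Lmap, ContinuousLinearMap.sum_apply, Finset.mul_sum, mul_assoc]

lemma Lmap_single {d : ℕ} (ζ : EuclideanSpace ℂ (Fin d)) (i : Fin d) :
    Lmap ζ (EuclideanSpace.single i 1) = Complex.I * ζ i := by
  rw [Lmap_apply]
  congr 1
  rw [Finset.sum_eq_single i (fun b _ hb => by simp [EuclideanSpace.single_apply, hb])
    (by simp)]
  simp [EuclideanSpace.single_apply]

lemma grad_phi {d : ℕ} (ζ : EuclideanSpace ℂ (Fin d))
    (r : EuclideanSpace ℝ (Fin d) → ℂ) (x : EuclideanSpace ℝ (Fin d))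
    (hr : DifferentiableAt ℝ r x) :
    grad (fun y => Complex.exp (Lmap ζ y) * (1 + r y)) x
      = Complex.exp (Lmap ζ x) • (grad r x + ((1 + r x) * Complex.I) • ζ) := by
  have hder : HasFDerivAt (fun y => Complex.exp (Lmap ζ y) * (1 + r y))
      (Complex.exp (Lmap ζ x) • (fderiv ℝ r x)
        + (1 + r x) • (Complex.exp (Lmap ζ x) • (Lmap ζ))) x :=
    ((Lmap ζ).hasFDerivAt.cexp).mul (hr.hasFDerivAt.const_add 1)
  have hf := hder.fderiv
  ext i
  show fderiv ℝ _ x (EuclideanSpace.single i 1) = _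
  rw [hf]
  simp only [ContinuousLinearMap.add_apply, ContinuousLinearMap.smul_apply, Lmap_single]
  show _ = Complex.exp (Lmap ζ x) * (pd r i x + ((1 + r x) * Complex.I) * ζ i)
  simp only [pd, smul_eq_mul]
  ring

lemma sum_abs_le {d : ℕ} (ζ : EuclideanSpace ℂ (Fin d)) (x : EuclideanSpace ℝ (Fin d)) :
    ‖∑ j, ζ j * (x j : ℂ)‖ ≤ ‖ζ‖ * ‖x‖ := by
  set w : EuclideanSpace ℂ (Fin d) :=
    (WithLp.equiv 2 (Fin d → ℂ)).symm (fun j => (starRingEnd ℂ) (ζ j)) with hw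
  set xc : EuclideanSpace ℂ (Fin d) :=
    (WithLp.equiv 2 (Fin d → ℂ)).symm (fun j => (x j : ℂ)) with hxc
  have h1 : (inner ℂ w xc : ℂ) = ∑ j, ζ j * (x j : ℂ) := by
    rw [PiLp.inner_apply]
    simp [hw, hxc, RCLike.inner_apply, mul_comm]
  have h2 : ‖∑ j, ζ j * (x j : ℂ)‖ ≤ ‖w‖ * ‖xc‖ := by
    rw [← h1]
    exact norm_inner_le_norm (𝕜 := ℂ) w xc
  have hwn : ‖w‖ = ‖ζ‖ := by
    rw [EuclideanSpace.norm_eq, EuclideanSpace.norm_eq]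
    simp [hw]
  have hxn : ‖xc‖ = ‖x‖ := by
    rw [EuclideanSpace.norm_eq, EuclideanSpace.norm_eq]
    simp [hxc]
  rw [hwn, hxn] at h2
  exact h2

/-- for `φ(x) = exp(i ζ·x)(1 + r(x))` on a nonempty bounded open set `Ω`,
with `‖ζ‖ > 1`, `|r| ≤ 1/2` and `‖∇r‖ ≤ 1/2` on `Ω`, we have `∇φ ≠ 0` on `Ω`,
`inf_Ω |φ| > 0`, and `sup_Ω (|φ| + ‖∇φ‖) ≤ μ inf_Ω |φ|` for some `μ > 0`. -/
theorem stmt_3 (d : ℕ) (Ω : Set (EuclideanSpace ℝ (Fin d)))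
    (hΩo : IsOpen Ω) (hΩne : Ω.Nonempty) (hΩb : Bornology.IsBounded Ω)
    (ζ : EuclideanSpace ℂ (Fin d)) (hζ : 1 < ‖ζ‖)
    (r : EuclideanSpace ℝ (Fin d) → ℂ)
    (hrdiff : ∀ x ∈ Ω, DifferentiableAt ℝ r x)
    (hr : ∀ x ∈ Ω, ‖r x‖ ≤ 1 / 2)
    (hgr : ∀ x ∈ Ω, ‖grad r x‖ ≤ 1 / 2)
    (φ : EuclideanSpace ℝ (Fin d) → ℂ)
    (hφ : φ = fun x => Complex.exp (Complex.I * ∑ j, ζ j * (x j : ℂ)) * (1 + r x)) :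
    (∀ x ∈ Ω, grad φ x ≠ 0) ∧
    (0 < ⨅ x : Ω, ‖φ x‖) ∧
    (∃ μ : ℝ, 0 < μ ∧ ∀ x ∈ Ω,
      ‖φ x‖ + ‖grad φ x‖ ≤ μ * ⨅ y : Ω, ‖φ y‖) := by
  haveI : Nonempty ↥Ω := hΩne.to_subtype
  obtain ⟨R0, hR0⟩ := isBounded_iff_forall_norm_le.mp hΩb
  set R : ℝ := max R0 0 with hRdef
  have hR : ∀ x ∈ Ω, ‖x‖ ≤ R := fun x hx => le_trans (hR0 x hx) (le_max_left _ _)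
  have hφL : φ = fun y => Complex.exp (Lmap ζ y) * (1 + r y) := by
    rw [hφ]; funext y; rw [Lmap_apply]
  set c : ℝ := Real.exp (-(‖ζ‖ * R)) with hcdef
  set Cm : ℝ := Real.exp (‖ζ‖ * R) with hCmdef
  have hcpos : 0 < c := Real.exp_pos _
  have hCmpos : 0 < Cm := Real.exp_pos _
  -- bound on the real part of Lmap ζ x
  have hre : ∀ x ∈ Ω, |(Lmap ζ x).re| ≤ ‖ζ‖ * R := by
    intro x hx
    rw [Lmap_apply]
    have h1 : (Complex.I * ∑ j, ζ j * (x j : ℂ)).re = -(∑ j, ζ j * (x j : ℂ)).im := by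
      simp [Complex.mul_re]
    rw [h1, abs_neg]
    calc |(∑ j, ζ j * (x j : ℂ)).im| ≤ ‖∑ j, ζ j * (x j : ℂ)‖ :=
          Complex.abs_im_le_norm _
      _ ≤ ‖ζ‖ * ‖x‖ := sum_abs_le ζ x
      _ ≤ ‖ζ‖ * R := by
          apply mul_le_mul_of_nonneg_left (hR x hx)
          positivity
  have hexp_lb : ∀ x ∈ Ω, c ≤ ‖Complex.exp (Lmap ζ x)‖ := by
    intro x hx
    rw [Complex.norm_exp]
    exact Real.exp_le_exp.2 (neg_le_of_abs_le (hre x hx))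
  have hexp_ub : ∀ x ∈ Ω, ‖Complex.exp (Lmap ζ x)‖ ≤ Cm := by
    intro x hx
    rw [Complex.norm_exp]
    exact Real.exp_le_exp.2 (le_of_abs_le (hre x hx))
  -- bounds on |1 + r x|
  have h1r_lb : ∀ x ∈ Ω, 1 / 2 ≤ ‖1 + r x‖ := by
    intro x hx
    have h := norm_sub_le (1 + r x) (r x)
    simp only [add_sub_cancel_right, norm_one] at h
    have := hr x hx
    linarith
  have h1r_ub : ∀ x ∈ Ω, ‖1 + r x‖ ≤ 3 / 2 := by
    intro x hx
    have h := norm_add_le (1 : ℂ) (r x)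
    simp only [norm_one] at h
    have := hr x hx
    linarith
  -- bounds on |φ|
  have hφ_lb : ∀ x ∈ Ω, c / 2 ≤ ‖φ x‖ := by
    intro x hx
    rw [hφL]
    simp only [norm_mul]
    calc c / 2 = c * (1 / 2) := by ring
      _ ≤ ‖Complex.exp (Lmap ζ x)‖ * ‖1 + r x‖ :=
          mul_le_mul (hexp_lb x hx) (h1r_lb x hx) (by norm_num) (norm_nonneg _)
  have hφ_ub : ∀ x ∈ Ω, ‖φ x‖ ≤ Cm * (3 / 2) := by
    intro x hx
    rw [hφL]
    simp only [norm_mul]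
    exact mul_le_mul (hexp_ub x hx) (h1r_ub x hx) (norm_nonneg _) hCmpos.le
  -- the vector v
  have hgφ : ∀ x ∈ Ω, grad φ x
      = Complex.exp (Lmap ζ x) • (grad r x + ((1 + r x) * Complex.I) • ζ) := by
    intro x hx
    rw [hφL]
    exact grad_phi ζ r x (hrdiff x hx)
  have hb_norm : ∀ x : EuclideanSpace ℝ (Fin d),
      ‖((1 + r x) * Complex.I) • ζ‖ = ‖1 + r x‖ * ‖ζ‖ := by
    intro x
    rw [norm_smul]
    simp
  have hv_lb : ∀ x ∈ Ω, (‖ζ‖ - 1) / 2 ≤ ‖grad r x + ((1 + r x) * Complex.I) • ζ‖ := by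
    intro x hx
    have htri : ‖((1 + r x) * Complex.I) • ζ‖
        ≤ ‖grad r x + ((1 + r x) * Complex.I) • ζ‖ + ‖grad r x‖ := by
      calc ‖((1 + r x) * Complex.I) • ζ‖
          = ‖grad r x + ((1 + r x) * Complex.I) • ζ - grad r x‖ := by
            rw [add_sub_cancel_left]
        _ ≤ _ := norm_sub_le _ _
    have hb : (1 / 2) * ‖ζ‖ ≤ ‖((1 + r x) * Complex.I) • ζ‖ := by
      rw [hb_norm]
      exact mul_le_mul_of_nonneg_right (h1r_lb x hx) (norm_nonneg _)
    have := hgr x hx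
    linarith
  have hv_ub : ∀ x ∈ Ω, ‖grad r x + ((1 + r x) * Complex.I) • ζ‖
      ≤ 1 / 2 + (3 / 2) * ‖ζ‖ := by
    intro x hx
    have h1 := norm_add_le (grad r x) (((1 + r x) * Complex.I) • ζ)
    have h2 : ‖((1 + r x) * Complex.I) • ζ‖ ≤ (3 / 2) * ‖ζ‖ := by
      rw [hb_norm]
      exact mul_le_mul_of_nonneg_right (h1r_ub x hx) (norm_nonneg _)
    have := hgr x hx
    linarith
  have hvne : ∀ x ∈ Ω, grad r x + ((1 + r x) * Complex.I) • ζ ≠ 0 := by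
    intro x hx h0
    have := hv_lb x hx
    rw [h0, norm_zero] at this
    linarith
  have hgφ_ub : ∀ x ∈ Ω, ‖grad φ x‖ ≤ Cm * (1 / 2 + (3 / 2) * ‖ζ‖) := by
    intro x hx
    rw [hgφ x hx, norm_smul]
    exact mul_le_mul (hexp_ub x hx) (hv_ub x hx) (norm_nonneg _) hCmpos.le
  have hinf_lb : c / 2 ≤ ⨅ y : Ω, ‖φ y‖ :=
    le_ciInf fun y => hφ_lb y y.2
  refine ⟨?_, ?_, ?_⟩
  · intro x hx
    rw [hgφ x hx]
    exact smul_ne_zero (Complex.exp_ne_zero _) (hvne x hx)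
  · exact lt_of_lt_of_le (half_pos hcpos) hinf_lb
  · obtain ⟨M, hMdef⟩ : ∃ M : ℝ, M = Cm * (3 / 2) + Cm * (1 / 2 + (3 / 2) * ‖ζ‖) :=
      ⟨_, rfl⟩
    have hz : (0:ℝ) ≤ ‖ζ‖ := norm_nonneg _
    have hMpos : 0 < M := by
      rw [hMdef]
      have h1 : 0 < Cm * (3 / 2) := mul_pos hCmpos (by norm_num)
      have h2 : 0 ≤ Cm * (1 / 2 + (3 / 2) * ‖ζ‖) := mul_nonneg hCmpos.le (by linarith)
      linarith
    refine ⟨M / (c / 2), div_pos hMpos (by linarith), ?_⟩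
    intro x hx
    have h1 : ‖φ x‖ + ‖grad φ x‖ ≤ M := by
      rw [hMdef]
      have := hφ_ub x hx
      have := hgφ_ub x hx
      linarith
    have h2 : M / (c / 2) * (c / 2) ≤ M / (c / 2) * ⨅ y : Ω, ‖φ y‖ :=
      mul_le_mul_of_nonneg_left hinf_lb (div_pos hMpos (by linarith)).le
    rw [div_mul_cancel₀ M (by linarith : c / 2 ≠ 0)] at h2
    linarith
end

section
/- Let (X, dist) be a metric space, m ∈ ℕ, ρ ≥ 0, and let a, b : Fin m → X be two families of points such that: (i) for every i there exists j with dist(b i, a j) ≤ ρ; and (ii) dist(b i, b i') > 2ρ whenever i ≠ i'. Then there exists a permutation π of Fin m such that dist(b i, a (π i)) ≤ ρ for every i. -/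
/-- if every `b i` is within distance `ρ` of some `a j`, and the points
`b i` are pairwise more than `2ρ` apart, then there is a permutation `π` with
`dist (b i) (a (π i)) ≤ ρ` for every `i`. -/
theorem stmt_4 {X : Type*} [MetricSpace X] (m : ℕ) (ρ : ℝ) (hρ : 0 ≤ ρ)
    (a b : Fin m → X)
    (hcover : ∀ i, ∃ j, dist (b i) (a j) ≤ ρ)
    (hsep : ∀ i i', i ≠ i' → 2 * ρ < dist (b i) (b i')) :
    ∃ π : Equiv.Perm (Fin m), ∀ i, dist (b i) (a (π i)) ≤ ρ := by
  choose f hf using hcover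
  have hinj : Function.Injective f := by
    intro i i' h
    by_contra hne
    have := hsep i i' hne
    have : dist (b i) (b i') ≤ 2 * ρ := by
      calc dist (b i) (b i') ≤ dist (b i) (a (f i)) + dist (a (f i)) (b i') :=
            dist_triangle _ _ _
        _ ≤ ρ + ρ := by
            have h2 := hf i'
            rw [← h] at h2
            rw [dist_comm] at h2
            exact add_le_add (hf i) h2
        _ = 2 * ρ := by ring
    linarith
  exact ⟨Equiv.ofBijective f (Finite.injective_iff_bijective.mp hinj), hf⟩
end

section
/- Let Ω be a set, φ, S : Ω → ℂ, and let θ > 0 satisfy |φ(x)| ≥ θ for all x ∈ Ω. Let m ≥ 1, let x_{1,·}, x_{2,·} : Fin m → Ω, and let σ > ρ ≥ 0 satisfy: |S(x_{1,i}) − S(x_{1,j})| ≥ σ for all i ≠ j, and |S(x_{1,j}) − S(x_{2,j})| ≤ ρ for all j. Fix j' ∈ Fin m and define φ_{j'}(x) := φ(x) · ∏_{j ≠ j'} (S(x) − S(x_{1,j})) · (S(x) − S(x_{2,j})). Then |φ_{j'}(x_{1,j'})| ≥ θ · σ^{m−1} · (σ − ρ)^{m−1}. -/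
/-- lower bound `|φ_{j'}(x_{1,j'})| ≥ θ σ^{m−1} (σ − ρ)^{m−1}` for the test
function `φ_{j'}(x) = φ(x) ∏_{j ≠ j'} (S(x) − S(x_{1,j}))(S(x) − S(x_{2,j}))`, when the
points `x_{1,·}` are `σ`-separated under `S` and `|S(x_{1,j}) − S(x_{2,j})| ≤ ρ < σ`. -/
theorem stmt_6 {Ω : Type*} (φ S : Ω → ℂ) (θ : ℝ) (hθ : 0 < θ)
    (hφ : ∀ x, θ ≤ ‖φ x‖)
    (m : ℕ) (hm : 1 ≤ m) (x₁ x₂ : Fin m → Ω)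
    (σ ρ : ℝ) (hρ : 0 ≤ ρ) (hρσ : ρ < σ)
    (hsep : ∀ i j, i ≠ j → σ ≤ ‖S (x₁ i) - S (x₁ j)‖)
    (hclose : ∀ j, ‖S (x₁ j) - S (x₂ j)‖ ≤ ρ)
    (j' : Fin m) (Φ : Ω → ℂ)
    (hΦ : Φ = fun x => φ x *
      ∏ j ∈ Finset.univ.erase j', ((S x - S (x₁ j)) * (S x - S (x₂ j)))) :
    θ * σ ^ (m - 1) * (σ - ρ) ^ (m - 1) ≤ ‖Φ (x₁ j')‖ := by
  have hσ : 0 < σ := lt_of_le_of_lt hρ hρσ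
  subst hΦ
  simp only [norm_mul, norm_prod]
  have hcard : (Finset.univ.erase j').card = m - 1 := by
    simp [Finset.card_erase_of_mem]
  have key : ∀ j ∈ Finset.univ.erase j',
      σ * (σ - ρ) ≤ ‖S (x₁ j') - S (x₁ j)‖ *
        ‖S (x₁ j') - S (x₂ j)‖ := by
    intro j hj
    have hne : j' ≠ j := (Finset.ne_of_mem_erase hj).symm
    have h1 : σ ≤ ‖S (x₁ j') - S (x₁ j)‖ := hsep _ _ hne
    have h2 : σ - ρ ≤ ‖S (x₁ j') - S (x₂ j)‖ := by
      have := hclose j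
      have htri := norm_sub_le_norm_sub_add_norm_sub (S (x₁ j')) (S (x₂ j)) (S (x₁ j))
      have h3 : ‖S (x₂ j) - S (x₁ j)‖ ≤ ρ := by
        rwa [← norm_neg, neg_sub]
      linarith [hsep j' j hne]
    exact mul_le_mul h1 h2 (by linarith) (norm_nonneg _)
  have hσρ : (0:ℝ) ≤ σ - ρ := by linarith
  calc θ * σ ^ (m - 1) * (σ - ρ) ^ (m - 1)
      = θ * (σ * (σ - ρ)) ^ (m - 1) := by rw [mul_pow]; ring
    _ ≤ ‖φ (x₁ j')‖ *
        ∏ j ∈ Finset.univ.erase j',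
          (‖S (x₁ j') - S (x₁ j)‖ * ‖S (x₁ j') - S (x₂ j)‖) := by
        apply mul_le_mul (hφ _)
        · rw [← hcard, ← Finset.prod_const]
          apply Finset.prod_le_prod
          · intro j hj; exact mul_nonneg hσ.le hσρ
          · intro j hj; exact key j hj
        · exact pow_nonneg (mul_nonneg hσ.le hσρ) _
        · exact norm_nonneg _
end

section
/- Let Ω be a set, φ, S : Ω → ℂ, and θ > 0 with |φ(x)| ≥ θ for all x ∈ Ω. Let m ≥ 1, let x_{1,·}, x_{2,·} : Fin m → Ω, let λ_{1,·}, λ_{2,·} : Fin m → ℝ with λ_{ℓ,j} ≥ λ̲ > 0 for all ℓ ∈ {1,2} and j, and let σ > 0 satisfy |S(x_{ℓ,i}) − S(x_{ℓ,j})| ≥ σ for each ℓ ∈ {1,2} and all i ≠ j. For ℓ' ∈ {1,2} and j' ∈ Fin m define ψ^{ℓ'}_{j'}(x) := φ(x) · ∏_{i ∈ Fin m} (S(x) − S(x_{3−ℓ',i})) · ∏_{j ≠ j'} (S(x) − S(x_{ℓ',j})). Let ε ≥ 0 and suppose λ_{ℓ',j'} · |ψ^{ℓ'}_{j'}(x_{ℓ',j'})|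 ≤ ε for every ℓ' ∈ {1,2} and j' ∈ Fin m. If ρ := (ε / (θ · λ̲ · σ^{m−1}))^{1/m} satisfies 2ρ < σ, then there exists a permutation π of Fin m such that |S(x_{1,j}) − S(x_{2,π(j)})| ≤ ρ for every j ∈ Fin m. -/
/-- location stability. If for each `ℓ' ∈ {1,2}` and `j'` the test-function
bound `λ_{ℓ',j'} |ψ^{ℓ'}_{j'}(x_{ℓ',j'})| ≤ ε` holds, where
`ψ^{ℓ'}_{j'}(x) = φ(x) ∏_i (S(x) − S(x_{3−ℓ',i})) ∏_{j≠j'} (S(x) − S(x_{ℓ',j}))`,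
and `ρ = (ε/(θ λ̲ σ^{m−1}))^{1/m}` satisfies `2ρ < σ`, then there is a permutation `π`
with `|S(x_{1,j}) − S(x_{2,π(j)})| ≤ ρ` for all `j`. -/
theorem stmt_10 {Ω : Type*} (φ S : Ω → ℂ) (θ : ℝ) (hθ : 0 < θ)
    (hφ : ∀ x, θ ≤ ‖φ x‖)
    (m : ℕ) (hm : 1 ≤ m) (x₁ x₂ : Fin m → Ω)
    (lam₁ lam₂ : Fin m → ℝ) (lamLB : ℝ) (hlamLB : 0 < lamLB)
    (hlam₁ : ∀ j, lamLB ≤ lam₁ j) (hlam₂ : ∀ j, lamLB ≤ lam₂ j)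
    (σ : ℝ) (hσ : 0 < σ)
    (hsep₁ : ∀ i j, i ≠ j → σ ≤ ‖S (x₁ i) - S (x₁ j)‖)
    (hsep₂ : ∀ i j, i ≠ j → σ ≤ ‖S (x₂ i) - S (x₂ j)‖)
    (ε : ℝ) (hε : 0 ≤ ε)
    (hbound₁ : ∀ j' : Fin m,
      lam₁ j' * ‖φ (x₁ j') * (∏ i : Fin m, (S (x₁ j') - S (x₂ i))) *
        ∏ j ∈ Finset.univ.erase j', (S (x₁ j') - S (x₁ j))‖ ≤ ε)
    (hbound₂ : ∀ j' : Fin m,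
      lam₂ j' * ‖φ (x₂ j') * (∏ i : Fin m, (S (x₂ j') - S (x₁ i))) *
        ∏ j ∈ Finset.univ.erase j', (S (x₂ j') - S (x₂ j))‖ ≤ ε)
    (ρ : ℝ) (hρ : ρ = (ε / (θ * lamLB * σ ^ (m - 1))) ^ ((1 : ℝ) / m))
    (hρσ : 2 * ρ < σ) :
    ∃ π : Equiv.Perm (Fin m), ∀ j,
      ‖S (x₁ j) - S (x₂ (π j))‖ ≤ ρ := by
  have hmpos : (0:ℝ) < m := by exact_mod_cast hm
  have hm0 : (m:ℝ) ≠ 0 := ne_of_gt hmpos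
  have hD : 0 < θ * lamLB * σ ^ (m - 1) := by positivity
  have hc : 0 ≤ ε / (θ * lamLB * σ ^ (m - 1)) := div_nonneg hε hD.le
  have hρ0 : 0 ≤ ρ := by rw [hρ]; positivity
  have hρm : ρ ^ m = ε / (θ * lamLB * σ ^ (m - 1)) := by
    rw [hρ, ← Real.rpow_natCast _ m, ← Real.rpow_mul hc, one_div,
      inv_mul_cancel₀ hm0, Real.rpow_one]
  have hne : Nonempty (Fin m) := ⟨⟨0, hm⟩⟩
  -- generic lemma for one family
  have key : ∀ j' : Fin m, ∃ i : Fin m,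
      ‖S (x₁ j') - S (x₂ i)‖ ≤ ρ := by
    intro j'
    set P := ∏ i : Fin m, ‖S (x₁ j') - S (x₂ i)‖ with hPdef
    set Q := ∏ j ∈ Finset.univ.erase j', ‖S (x₁ j') - S (x₁ j)‖ with hQdef
    have hQ : σ ^ (m - 1) ≤ Q := by
      have hcard : (Finset.univ.erase j').card = m - 1 := by
        rw [Finset.card_erase_of_mem (Finset.mem_univ _), Finset.card_univ,
          Fintype.card_fin]
      have := Finset.prod_le_prod (s := Finset.univ.erase j') (f := fun _ => σ)
        (g := fun j => ‖S (x₁ j') - S (x₁ j)‖)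
        (fun i _ => hσ.le)
        (fun j hj => hsep₁ j' j (fun h => (Finset.mem_erase.mp hj).1 h.symm))
      rwa [Finset.prod_const, hcard] at this
    have hP0 : 0 ≤ P := Finset.prod_nonneg fun i _ => (norm_nonneg _)
    have hb := hbound₁ j'
    rw [norm_mul, norm_mul, norm_prod, norm_prod] at hb
    have hP : P ≤ ρ ^ m := by
      rw [hρm, le_div_iff₀ hD]
      calc P * (θ * lamLB * σ ^ (m-1)) = lamLB * (θ * P * σ ^ (m-1)) := by ring
        _ ≤ lam₁ j' * (‖φ (x₁ j')‖ * P * Q) := by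
            have h1 : θ * P * σ ^ (m-1) ≤ ‖φ (x₁ j')‖ * P * Q := by
              have := mul_le_mul (mul_le_mul (hφ (x₁ j')) le_rfl hP0
                ((hθ.le.trans (hφ (x₁ j')))) ) hQ (by positivity)
                (by positivity)
              exact this
            exact mul_le_mul (hlam₁ j') h1 (by positivity) ((hlamLB.le).trans (hlam₁ j'))
        _ ≤ ε := hb
    obtain ⟨i, -, hi⟩ := Finset.exists_min_image Finset.univ
      (fun i => ‖S (x₁ j') - S (x₂ i)‖) Finset.univ_nonempty
    refine ⟨i, ?_⟩
    have hpow : ‖S (x₁ j') - S (x₂ i)‖ ^ m ≤ ρ ^ m := by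
      have h2 := Finset.prod_le_prod (s := (Finset.univ : Finset (Fin m)))
        (f := fun _ => ‖S (x₁ j') - S (x₂ i)‖)
        (g := fun j => ‖S (x₁ j') - S (x₂ j)‖)
        (fun _ _ => norm_nonneg _)
        (fun j _ => hi j (Finset.mem_univ j))
      rw [Finset.prod_const, Finset.card_univ, Fintype.card_fin] at h2
      exact h2.trans hP
    exact le_of_pow_le_pow_left₀ (by omega) hρ0 hpow
  choose f hf using key
  have hinj : Function.Injective f := by
    intro a b hab
    by_contra hne'
    have h1 := hf a
    have h2 := hf b
    have htri : ‖S (x₁ a) - S (x₁ b)‖ ≤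
        ‖S (x₁ a) - S (x₂ (f a))‖ + ‖S (x₂ (f b)) - S (x₁ b)‖ := by
      rw [hab]
      exact norm_sub_le_norm_sub_add_norm_sub _ _ _
    have h2' : ‖S (x₂ (f b)) - S (x₁ b)‖ ≤ ρ := by
      rw [norm_sub_rev]; exact h2
    have := hsep₁ a b hne'
    linarith
  refine ⟨Equiv.ofBijective f (Finite.injective_iff_bijective.mp hinj), fun j => hf j⟩
end
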